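/- arXiv:2106.00765 — 8 statements merged into one kernel-verified Lean document; each statement's English description precedes it below -/
import Mathlib

section
/- Let H be an m×2n matrix over F_2 with rank(H) = n - k, viewed as the symplectic representation of the stabilizer generators of an [[n,k]] stabilizer code on qubit set Q = [n]. Suppose Q = A ⊔ B ⊔ C is a partition into three disjoint sets, and both A and B satisfy the erasure-correctability criterion: 2|E| ≤ rank(H) + rank(H_E) - rank(H_{E^c}) for E = A and E = B, where H_E denotes the submatrix of H consisting of the columns indexed by qubits in E (each qubit contributes two columns). Then k ≤ |C|. -/
/-- Submatrix of `H` on the columns belonging to qubits in `E`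
(each qubit contributes the two columns `(q, 0)` and `(q, 1)`). -/
noncomputable def qubitColSub {m n : ℕ} (H : Matrix (Fin m) (Fin n × Fin 2) (ZMod 2))
    (E : Finset (Fin n)) : Matrix (Fin m) {p : Fin n × Fin 2 // p.1 ∈ E} (ZMod 2) :=
  fun i p => H i p.1

/-- A subset `E` of qubits is correctable (as an erasure) when
`2|E| ≤ rank H + rank H_E - rank H_{Eᶜ}`. -/
def ErasureCorrectable {m n : ℕ} (H : Matrix (Fin m) (Fin n × Fin 2) (ZMod 2))
    (E : Finset (Fin n)) : Prop :=
  2 * (E.card : ℤ) ≤ (H.rank : ℤ) + ((qubitColSub H E).rank : ℤ)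
      - ((qubitColSub H Eᶜ).rank : ℤ)

/-- Selecting a subset of the columns can only reduce the rank. -/
lemma rank_submatrix_id_le {F : Type*} [Field F] {μ : ℕ} {α β : Type*}
    [Fintype α] [Fintype β] (A : Matrix (Fin μ) α F) (f : β → α) :
    (A.submatrix id f).rank ≤ A.rank := by
  classical
  rw [Matrix.rank, Matrix.rank]
  apply Submodule.finrank_mono
  rintro v ⟨x, rfl⟩
  refine ⟨fun a => ∑ b, if f b = a then x b else 0, ?_⟩
  ext i
  simp only [Matrix.mulVecLin_apply, Matrix.mulVec, dotProduct,
    Matrix.submatrix_apply, id_eq, Finset.mul_sum]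
  rw [Finset.sum_comm]
  refine Finset.sum_congr rfl fun b _ => ?_
  simp [Finset.sum_ite_eq' Finset.univ (f b) (fun a => A i a * x b)]

lemma qubit_rank_mono {m n : ℕ} (H : Matrix (Fin m) (Fin n × Fin 2) (ZMod 2))
    {S T : Finset (Fin n)} (h : S ⊆ T) :
    (qubitColSub H S).rank ≤ (qubitColSub H T).rank := by
  have : qubitColSub H S =
      (qubitColSub H T).submatrix id (fun p => ⟨p.1, h p.2⟩) := rfl
  rw [this]
  exact rank_submatrix_id_le _ _

theorem stmt0_rank_lemma_k_le_C {m n k : ℕ}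
    (H : Matrix (Fin m) (Fin n × Fin 2) (ZMod 2))
    (hrank : H.rank = n - k) (hkn : k ≤ n)
    (A B C : Finset (Fin n))
    (hAB : Disjoint A B) (hAC : Disjoint A C) (hBC : Disjoint B C)
    (hcover : A ∪ B ∪ C = Finset.univ)
    (hA : ErasureCorrectable H A) (hB : ErasureCorrectable H B) :
    k ≤ C.card := by
  have hBA : B ⊆ Aᶜ := by
    intro x hx
    simp only [Finset.mem_compl]
    exact fun hxA => (Finset.disjoint_left.mp hAB) hxA hx
  have hABc : A ⊆ Bᶜ := by
    intro x hx
    simp only [Finset.mem_compl]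
    exact fun hxB => (Finset.disjoint_left.mp hAB) hx hxB
  have h1 : (qubitColSub H B).rank ≤ (qubitColSub H Aᶜ).rank := qubit_rank_mono H hBA
  have h2 : (qubitColSub H A).rank ≤ (qubitColSub H Bᶜ).rank := qubit_rank_mono H hABc
  have hcard : A.card + B.card + C.card = n := by
    have hd : Disjoint (A ∪ B) C := Finset.disjoint_union_left.mpr ⟨hAC, hBC⟩
    have := congrArg Finset.card hcover
    rwa [Finset.card_union_of_disjoint hd, Finset.card_union_of_disjoint hAB,
      Finset.card_univ, Fintype.card_fin] at this
  unfold ErasureCorrectable at hA hB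
  have hr : (H.rank : ℤ) = (n : ℤ) - k := by
    rw [hrank]; push_cast [hkn]; ring
  omega
end

section
/- With the setup of an m×2n matrix H over F_2 and the rank criterion for correctability (2|E| ≤ rank(H) + rank(H_E) - rank(H_{E^c})), if A and B are disjoint correctable subsets of [n], then |A| + |B| ≤ rank(H). -/
lemma qubitColSub_rank_mono {m n : ℕ} (H : Matrix (Fin m) (Fin n × Fin 2) (ZMod 2))
    {E F : Finset (Fin n)} (h : E ⊆ F) :
    (qubitColSub H E).rank ≤ (qubitColSub H F).rank := by
  rw [Matrix.rank_eq_finrank_span_cols, Matrix.rank_eq_finrank_span_cols]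
  apply Submodule.finrank_mono
  apply Submodule.span_mono
  rintro v ⟨⟨p, hp⟩, rfl⟩
  exact ⟨⟨p, h hp⟩, rfl⟩

lemma qubitColSub_rank_le {m n : ℕ} (H : Matrix (Fin m) (Fin n × Fin 2) (ZMod 2))
    (E : Finset (Fin n)) : (qubitColSub H E).rank ≤ H.rank := by
  rw [Matrix.rank_eq_finrank_span_cols, Matrix.rank_eq_finrank_span_cols]
  apply Submodule.finrank_mono
  apply Submodule.span_mono
  rintro v ⟨⟨p, hp⟩, rfl⟩
  exact ⟨p, rfl⟩

theorem stmt1_two_correctable_sets {m n : ℕ}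
    (H : Matrix (Fin m) (Fin n × Fin 2) (ZMod 2))
    (A B : Finset (Fin n)) (hAB : Disjoint A B)
    (hA : ErasureCorrectable H A) (hB : ErasureCorrectable H B) :
    A.card + B.card ≤ H.rank := by
  have hBA : B ⊆ Aᶜ := le_compl_iff_disjoint_left.mpr hAB
  have hAB' : A ⊆ Bᶜ := le_compl_iff_disjoint_right.mpr hAB
  have h1 := qubitColSub_rank_mono H hBA
  have h2 := qubitColSub_rank_mono H hAB'
  unfold ErasureCorrectable at hA hB
  have hgoal : (A.card : ℤ) + B.card ≤ (H.rank : ℤ) := by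
    have h1' : ((qubitColSub H B).rank : ℤ) ≤ ((qubitColSub H Aᶜ).rank : ℤ) := by
      exact_mod_cast h1
    have h2' : ((qubitColSub H A).rank : ℤ) ≤ ((qubitColSub H Bᶜ).rank : ℤ) := by
      exact_mod_cast h2
    linarith
  exact_mod_cast hgoal
end

section
/- Let S : ℕ → ℕ satisfy the recurrence S(n) = s(n) + 2·S(⌊n/2⌋) for n ≥ d and S(t) = 0 for t < d, where s(n) ≤ C·n^c for some constants C > 0 and 0 < c < 1. Then there is a constant C' (depending on C and c but not on n or d) such that S(n) ≤ C'·d^{c-1}·n for all n ≥ 1. -/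
open Real

set_option maxHeartbeats 1000000

/-- Closed-form bound for the divide-and-conquer recurrence
`S(n) = s(n) + 2·S(⌊n/2⌋)` (for `n ≥ d`, with `S(t) = 0` for `t < d`),
when `s(n) ≤ C·n^c` with `0 < c < 1`:  `S(n) ≤ C'·d^(c-1)·n`,
where `C'` depends only on `C` and `c`. -/
theorem stmt3_recurrence_closed_form (C c : ℝ) (hC : 0 < C) (hc0 : 0 < c) (hc1 : c < 1) :
    ∃ C' : ℝ, 0 < C' ∧
      ∀ (d : ℕ), 1 ≤ d →
        ∀ (s S : ℕ → ℕ),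
          (∀ n : ℕ, (s n : ℝ) ≤ C * (n : ℝ) ^ c) →
          (∀ n : ℕ, d ≤ n → S n = s n + 2 * S (n / 2)) →
          (∀ t : ℕ, t < d → S t = 0) →
          ∀ n : ℕ, 1 ≤ n → (S n : ℝ) ≤ C' * (d : ℝ) ^ (c - 1) * (n : ℝ) := by
  have hc' : c ≤ 1 := hc1.le
  set t : ℝ := (2:ℝ) ^ c with ht_def
  have ht0 : 0 < t := Real.rpow_pos_of_pos two_pos c
  have ht2 : t < 2 := by
    calc t < (2:ℝ) ^ (1:ℝ) := Real.rpow_lt_rpow_of_exponent_lt one_lt_two hc1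
    _ = 2 := Real.rpow_one 2
  have h2t : 1 < 2 / t := (one_lt_div ht0).2 ht2
  set ρ : ℝ := (2 / t + 1) / 2 with hρ_def
  have hρ1 : 1 < ρ := by rw [hρ_def]; linarith
  have hρlt : ρ < 2 / t := by rw [hρ_def]; linarith
  set B : ℝ := C / (ρ - 1) with hB_def
  have hB : 0 < B := div_pos hC (by linarith)
  have hBρ : B * (ρ - 1) = C := div_mul_cancel₀ C (by linarith : ρ - 1 ≠ 0)
  set q : ℝ := ρ * t / 2 with hq_def
  have hq0 : 0 < q := by positivity
  have hq1 : q < 1 := by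
    have : ρ * t < 2 := (lt_div_iff₀ ht0).1 hρlt
    rw [hq_def]; linarith
  set N : ℕ := ⌈1/(1-q)⌉₊ + 2 with hN_def
  have hNq : ∀ n : ℕ, N ≤ n → q * n ≤ (n:ℝ) - 1 := by
    intro n hn
    have h1 : 1/(1-q) ≤ (N:ℝ) := by
      have := Nat.le_ceil (1/(1-q))
      have h2 : ((⌈1/(1-q)⌉₊ : ℕ):ℝ) ≤ (N:ℝ) := by exact_mod_cast Nat.le_add_right _ 2
      linarith
    have h3 : (N:ℝ) ≤ n := by exact_mod_cast hn
    have h4 : (0:ℝ) < 1 - q := by linarith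
    have h5 : 1/(1-q) ≤ (n:ℝ) := by linarith
    have h6 : 1 ≤ (n:ℝ) * (1-q) := by
      rw [div_le_iff₀ h4] at h5; linarith
    nlinarith
  set K : ℝ := 2*C*(N:ℝ)^2 + B + C with hK_def
  have hK : 0 < K := by positivity
  clear_value t ρ B q N K
  refine ⟨K, hK, ?_⟩
  intro d hd s S hs hrec hbase
  have hd1 : (1:ℝ) ≤ d := by exact_mod_cast hd
  have hdpow : 0 < (d:ℝ) ^ (c-1) := Real.rpow_pos_of_pos (by linarith) _
  -- crude bound: S n ≤ C n^c (2n - 1)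
  have lemA : ∀ n : ℕ, (S n : ℝ) ≤ C * (n:ℝ)^c * (2*(n:ℝ) - 1) := by
    intro n
    induction n using Nat.strong_induction_on with
    | _ n ih =>
      rcases lt_or_ge n d with h | h
      · rw [hbase n h]
        rcases Nat.eq_zero_or_pos n with rfl | hn
        · simp [Real.zero_rpow hc0.ne']
        · have h1 : (1:ℝ) ≤ (n:ℝ) := by exact_mod_cast hn
          have h2 : (0:ℝ) ≤ (n:ℝ)^c := Real.rpow_nonneg (by positivity) c
          push_cast
          have := mul_nonneg (mul_nonneg hC.le h2) (by linarith : (0:ℝ) ≤ 2*(n:ℝ)-1)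
          linarith
      · have hn1 : 1 ≤ n := le_trans hd h
        have hn1' : (1:ℝ) ≤ (n:ℝ) := by exact_mod_cast hn1
        rw [hrec n h]
        push_cast
        have ihm := ih (n/2) (Nat.div_lt_self (by omega) one_lt_two)
        have hm2 : 2*(n/2) ≤ n ∧ n ≤ 2*(n/2)+1 := by omega
        have hsn := hs n
        have hnc : (0:ℝ) ≤ (n:ℝ)^c := Real.rpow_nonneg (by positivity) c
        rcases Nat.eq_zero_or_pos (n/2) with hm0 | hm1
        · rw [hm0] at ihm ⊢
          simp [Real.zero_rpow hc0.ne'] at ihm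
          rw [ihm]
          push_cast
          have := mul_nonneg (mul_nonneg hC.le hnc) (by linarith : (0:ℝ) ≤ 2*(n:ℝ)-2)
          nlinarith [hsn]
        · have hmn : (n/2 : ℕ) ≤ n := Nat.div_le_self n 2
          have hpowle : ((n/2:ℕ):ℝ)^c ≤ (n:ℝ)^c :=
            Real.rpow_le_rpow (by positivity) (by exact_mod_cast hmn) hc0.le
          have h1 : (1:ℝ) ≤ ((n/2:ℕ):ℝ) := by exact_mod_cast hm1
          have h2 : 2*((n/2:ℕ):ℝ) ≤ (n:ℝ) := by exact_mod_cast hm2.1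
          have hA : ((n/2:ℕ):ℝ)^c * (2*((n/2:ℕ):ℝ)-1) ≤ (n:ℝ)^c * (2*((n/2:ℕ):ℝ)-1) :=
            mul_le_mul_of_nonneg_right hpowle (by linarith)
          have hA' : C * (((n/2:ℕ):ℝ)^c * (2*((n/2:ℕ):ℝ)-1)) ≤ C * ((n:ℝ)^c * (2*((n/2:ℕ):ℝ)-1)) :=
            mul_le_mul_of_nonneg_left hA hC.le
          have hB' : C * ((n:ℝ)^c * (2*(2*((n/2:ℕ):ℝ))-2)) ≤ C * ((n:ℝ)^c * (2*(n:ℝ)-2)) :=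
            mul_le_mul_of_nonneg_left
              (mul_le_mul_of_nonneg_left (by linarith) hnc) hC.le
          linarith [ihm, hsn]
  -- main bound
  have main : ∀ n : ℕ, d ≤ n → (S n : ℝ) ≤ K * (n:ℝ) * (d:ℝ)^(c-1) - B * (n:ℝ)^c := by
    intro n
    induction n using Nat.strong_induction_on with
    | _ n ih =>
      intro hdn
      have hn1 : 1 ≤ n := le_trans hd hdn
      have hn1' : (1:ℝ) ≤ (n:ℝ) := by exact_mod_cast hn1
      have hnc0 : (0:ℝ) ≤ (n:ℝ)^c := Real.rpow_nonneg (by positivity) c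
      have hnc1 : (1:ℝ) ≤ (n:ℝ)^c := by
        calc (1:ℝ) = (n:ℝ)^(0:ℝ) := (Real.rpow_zero _).symm
        _ ≤ (n:ℝ)^c := Real.rpow_le_rpow_of_exponent_le hn1' hc0.le
      have hF1 : (n:ℝ)^c ≤ (n:ℝ) * (d:ℝ)^(c-1) := by
        have h1 : (n:ℝ)^(c-1) ≤ (d:ℝ)^(c-1) :=
          Real.rpow_le_rpow_of_nonpos (by linarith) (by exact_mod_cast hdn) (by linarith)
        calc (n:ℝ)^c = (n:ℝ)^((1:ℝ)+(c-1)) := by ring_nf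
        _ = (n:ℝ)^(1:ℝ) * (n:ℝ)^(c-1) := Real.rpow_add (by linarith) _ _
        _ = (n:ℝ) * (n:ℝ)^(c-1) := by rw [Real.rpow_one]
        _ ≤ (n:ℝ) * (d:ℝ)^(c-1) := mul_le_mul_of_nonneg_left h1 (by linarith)
      rcases lt_or_ge n N with hsmall | hbig
      · -- small n: use crude bound
        have hA := lemA n
        have h1 : (n:ℝ)^c ≤ (n:ℝ) := by
          calc (n:ℝ)^c ≤ (n:ℝ)^(1:ℝ) := Real.rpow_le_rpow_of_exponent_le hn1' hc'
          _ = (n:ℝ) := Real.rpow_one _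
        have h2 : (n:ℝ) ≤ (N:ℝ) := by exact_mod_cast hsmall.le
        have p1 : (n:ℝ)^c * (2*(n:ℝ)-1) ≤ (n:ℝ)*(2*(n:ℝ)-1) :=
          mul_le_mul_of_nonneg_right h1 (by linarith)
        have hnn : (n:ℝ)^2 ≤ (N:ℝ)^2 := pow_le_pow_left₀ (by positivity) h2 2
        have A2 : C*((n:ℝ)^c*(2*(n:ℝ)-1)) ≤ C*((n:ℝ)*(2*(n:ℝ)-1)) :=
          mul_le_mul_of_nonneg_left p1 hC.le
        have A3 : C*((n:ℝ)*(2*(n:ℝ)-1)) ≤ 2*C*(N:ℝ)^2 := by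
          have h5 := mul_le_mul_of_nonneg_left hnn (by positivity : (0:ℝ) ≤ 2*C)
          have h6 := mul_nonneg hC.le (by linarith : (0:ℝ) ≤ (n:ℝ))
          nlinarith
        have e1 : (S n:ℝ) ≤ 2*C*(N:ℝ)^2 := by linarith [lemA n]
        have e2 : (0:ℝ) ≤ K * ((n:ℝ) * (d:ℝ)^(c-1) - (n:ℝ)^c) := mul_nonneg hK.le (by linarith)
        have e3 : (0:ℝ) ≤ (2*C*(N:ℝ)^2 + C) * ((n:ℝ)^c - 1) := by
          have : (0:ℝ) ≤ 2*C*(N:ℝ)^2 + C := by positivity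
          exact mul_nonneg this (by linarith)
        have e4 : K * (n:ℝ)^c - B*(n:ℝ)^c = (2*C*(N:ℝ)^2 + C) * (n:ℝ)^c := by
          rw [hK_def]; ring
        linarith [hC.le]
      · -- large n
        have hm2 : 2*(n/2) ≤ n ∧ n ≤ 2*(n/2)+1 ∧ n/2 < n ∧ 1 ≤ n/2 := by
          have hN2 : 2 ≤ N := hN_def ▸ Nat.le_add_left 2 _
          omega
        have h2m : 2*((n/2:ℕ):ℝ) ≤ (n:ℝ) := by exact_mod_cast hm2.1
        have hKCB : C + B ≤ K := by
          have : (0:ℝ) ≤ 2*C*(N:ℝ)^2 := by positivity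
          rw [hK_def]; linarith
        rcases lt_or_ge (n/2) d with hmd | hmd
        · rw [hrec n hdn, hbase _ hmd]
          push_cast
          have h3 : (C+B) * (n:ℝ)^c ≤ K * (n:ℝ)^c := mul_le_mul_of_nonneg_right hKCB hnc0
          have h4 : K * (n:ℝ)^c ≤ K * ((n:ℝ) * (d:ℝ)^(c-1)) := mul_le_mul_of_nonneg_left hF1 hK.le
          have := hs n
          nlinarith
        · have ihm := ih (n/2) hm2.2.2.1 hmd
          rw [hrec n hdn]
          push_cast
          -- key inequality
          have key : (C + B) * (n:ℝ)^c ≤ 2 * B * ((n/2:ℕ):ℝ)^c := by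
            have hq : q * (n:ℝ) ≤ (n:ℝ) - 1 := hNq n hbig
            have hmge : ((n:ℝ)-1)/2 ≤ ((n/2:ℕ):ℝ) := by
              have : (n:ℝ) ≤ 2*((n/2:ℕ):ℝ)+1 := by exact_mod_cast hm2.2.1
              linarith
            have h5 : ((q*(n:ℝ))/2 : ℝ)^c ≤ ((n/2:ℕ):ℝ)^c :=
              Real.rpow_le_rpow (by positivity) (by linarith) hc0.le
            have h6 : ((q*(n:ℝ))/2 : ℝ)^c = q^c * (n:ℝ)^c / t := by
              rw [Real.div_rpow (by positivity) (by norm_num), Real.mul_rpow hq0.le (by positivity),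
                ht_def]
            have h7 : q ≤ q^c := by
              calc q = q^(1:ℝ) := (Real.rpow_one q).symm
              _ ≤ q^c := Real.rpow_le_rpow_of_exponent_ge hq0 hq1.le hc'
            have h8 : q * (n:ℝ)^c / t ≤ q^c * (n:ℝ)^c / t := by
              gcongr
            have h9 : q * (n:ℝ)^c / t = (ρ/2) * (n:ℝ)^c := by
              rw [hq_def]; field_simp
            have h10 : (ρ/2) * (n:ℝ)^c ≤ ((n/2:ℕ):ℝ)^c := by
              rw [← h9]; rw [h6] at h5; linarith
            have h11 : (C + B) = B * ρ := by linarith [hBρ]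
            nlinarith [mul_le_mul_of_nonneg_left h10 (by linarith : (0:ℝ) ≤ 2*B)]
          have h9 : 2*(K * ((n/2:ℕ):ℝ) * (d:ℝ)^(c-1)) ≤ K * (n:ℝ) * (d:ℝ)^(c-1) := by
            nlinarith [mul_nonneg (mul_nonneg hK.le hdpow.le) (sub_nonneg.2 h2m)]
          linarith [hs n, ihm]
  -- conclude
  intro n hn
  have hn1' : (1:ℝ) ≤ (n:ℝ) := by exact_mod_cast hn
  rcases lt_or_ge n d with h | h
  · rw [hbase n h]
    push_cast
    positivity
  · have := main n h
    have hnc0 : (0:ℝ) ≤ (n:ℝ)^c := Real.rpow_nonneg (by positivity) c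
    nlinarith
end

section
/- Let G be a finite simple graph that is s-separable for a function s with parameter α = 1/2, i.e., every subgraph induced on a vertex set of size r admits a partition V' = A ⊔ S ⊔ B with |S| ≤ s(r), |A|, |B| ≤ r/2, and no edges between A and B. Then for every d ≤ |V(G)|, there exists a partition V(G) = A ⊔ A^c such that A is a disjoint union of vertex sets, each of size strictly less than d, with no edges of G between distinct parts, and |A^c| ≤ S_d(|V(G)|), where S_d is defined by the recurrence S_d(r) = s(r) + 2·S_d(⌈r/2⌉) with S_d(t) = 0 for t < d. -/
private lemma aux_recursive_separation {V : Type*} [Fintype V] [DecidableEq V]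
    (G : SimpleGraph V) (s Sd : ℕ → ℕ) (d : ℕ)
    (hsep : ∀ V' : Finset V, ∃ A Sp B : Finset V,
      A ∪ Sp ∪ B = V' ∧ Disjoint A Sp ∧ Disjoint A B ∧ Disjoint Sp B ∧
      Sp.card ≤ s V'.card ∧ 2 * A.card ≤ V'.card ∧ 2 * B.card ≤ V'.card ∧
      (∀ u ∈ A, ∀ v ∈ B, ¬ G.Adj u v))
    (hrec : ∀ r : ℕ, d ≤ r → Sd r = s r + 2 * Sd ((r + 1) / 2)) :
    ∀ n : ℕ, n ≤ Fintype.card V → ∀ V' : Finset V, V'.card ≤ n →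
    ∃ (P : Finset (Finset V)) (Ac : Finset V),
      (P.biUnion id) ∪ Ac = V' ∧
      Disjoint (P.biUnion id) Ac ∧
      (∀ p ∈ P, p.card < d) ∧
      (∀ p ∈ P, ∀ q ∈ P, p ≠ q →
        Disjoint p q ∧ ∀ u ∈ p, ∀ v ∈ q, ¬ G.Adj u v) ∧
      Ac.card ≤ Sd n := by
  intro n
  induction n using Nat.strong_induction_on with
  | _ n ih =>
    intro hnV V' hV'n
    by_cases hsmall : V'.card < d
    · -- base case: V' itself is a single small part
      refine ⟨{V'}, ∅, by simp, by simp, ?_, ?_, by simp⟩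
      · intro p hp; simp at hp; subst hp; exact hsmall
      · intro p hp q hq hpq; simp at hp hq; subst hp; subst hq; exact absurd rfl hpq
    push_neg at hsmall
    by_cases hV0 : V'.card = 0
    · refine ⟨∅, ∅, ?_, by simp, by simp, by simp, by simp⟩
      simp [Finset.card_eq_zero.mp hV0]
    -- now 1 ≤ V'.card, d ≤ V'.card ≤ n
    by_cases hn1 : n ≤ 1
    · -- degenerate: V'.card = 1 and d ≤ 1; hypotheses are contradictory
      exfalso
      have hc1 : V'.card = 1 := by omega
      have h1 := hrec 1 (by omega)
      norm_num at h1
      have hs1 : s 1 = 0 := by omega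
      obtain ⟨A, Sp, B, hu, _, _, _, hSp, hA, hB, _⟩ := hsep V'
      rw [hc1] at hSp hA hB
      have h2 : (A ∪ Sp ∪ B).card ≤ A.card + Sp.card + B.card := by
        calc (A ∪ Sp ∪ B).card ≤ (A ∪ Sp).card + B.card := Finset.card_union_le _ _
          _ ≤ A.card + Sp.card + B.card := by
              have := Finset.card_union_le A Sp; omega
      rw [hu, hc1] at h2
      omega
    push_neg at hn1
    -- main recursive case
    set n' : ℕ := (n + 1) / 2 with hn'
    have hn'lt : n' < n := by omega
    have hn'V : n' ≤ Fintype.card V := by omega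
    -- pad V' to a set W of size exactly n
    obtain ⟨W, hVW, -, hWcard⟩ :=
      Finset.exists_subsuperset_card_eq (Finset.subset_univ V')
        hV'n (by rw [Finset.card_univ]; exact hnV)
    obtain ⟨A, Sp, B, hu, hASp, hAB, hSpB, hSp, hA, hB, hedge⟩ := hsep W
    rw [hWcard] at hSp hA hB
    set A' := A ∩ V' with hA'
    set B' := B ∩ V' with hB'
    set Sp' := Sp ∩ V' with hSp'
    have hA'subA : A' ⊆ A := by rw [hA']; exact Finset.inter_subset_left
    have hB'subB : B' ⊆ B := by rw [hB']; exact Finset.inter_subset_left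
    have hSp'subSp : Sp' ⊆ Sp := by rw [hSp']; exact Finset.inter_subset_left
    have hA'card : A'.card ≤ n' := by
      have := Finset.card_le_card hA'subA; omega
    have hB'card : B'.card ≤ n' := by
      have := Finset.card_le_card hB'subB; omega
    obtain ⟨PA, AcA, huA, hdA, hsmA, hpwA, hcA⟩ := ih n' hn'lt hn'V A' hA'card
    obtain ⟨PB, AcB, huB, hdB, hsmB, hpwB, hcB⟩ := ih n' hn'lt hn'V B' hB'card
    have hbA : (PA.biUnion id) ⊆ A' := huA ▸ Finset.subset_union_left
    have hbB : (PB.biUnion id) ⊆ B' := huB ▸ Finset.subset_union_left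
    have hAcA : AcA ⊆ A' := huA ▸ Finset.subset_union_right
    have hAcB : AcB ⊆ B' := huB ▸ Finset.subset_union_right
    have hA'B' : Disjoint A' B' :=
      hAB.mono (Finset.inter_subset_left) (Finset.inter_subset_left)
    have hA'Sp' : Disjoint A' Sp' :=
      hASp.mono (Finset.inter_subset_left) (Finset.inter_subset_left)
    have hB'Sp' : Disjoint Sp' B' :=
      hSpB.mono (Finset.inter_subset_left) (Finset.inter_subset_left)
    have hbu : (PA ∪ PB).biUnion id = PA.biUnion id ∪ PB.biUnion id := by
      ext x
      simp only [Finset.mem_biUnion, Finset.mem_union, id]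
      constructor
      · rintro ⟨p, hp | hp, hx⟩
        exacts [Or.inl ⟨p, hp, hx⟩, Or.inr ⟨p, hp, hx⟩]
      · rintro (⟨p, hp, hx⟩ | ⟨p, hp, hx⟩)
        exacts [⟨p, Or.inl hp, hx⟩, ⟨p, Or.inr hp, hx⟩]
    refine ⟨PA ∪ PB, (AcA ∪ AcB) ∪ Sp', ?_, ?_, ?_, ?_, ?_⟩
    · -- union is V'
      rw [hbu]
      have : (A' ∪ B') ∪ Sp' = V' := by
        have : (A ∪ Sp ∪ B) ∩ V' = V' :=
          Finset.inter_eq_right.mpr (hu ▸ hVW)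
        rw [← this]
        ext x
        simp only [hA', hB', hSp', Finset.mem_union, Finset.mem_inter]
        tauto
      rw [← this]
      ext x
      have h1 := huA
      have h2 := huB
      simp only [← h1, ← h2, Finset.mem_union]
      tauto
    · -- disjointness of union with leftover
      rw [hbu, Finset.disjoint_union_left]
      constructor
      · exact Finset.disjoint_union_right.mpr
          ⟨Finset.disjoint_union_right.mpr ⟨hdA, hA'B'.mono hbA hAcB⟩,
            hA'Sp'.mono hbA le_rfl⟩
      · exact Finset.disjoint_union_right.mpr
          ⟨Finset.disjoint_union_right.mpr ⟨(hA'B'.symm).mono hbB hAcA, hdB⟩,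
            (hB'Sp'.symm).mono hbB le_rfl⟩
    · intro p hp
      rcases Finset.mem_union.mp hp with h | h
      · exact hsmA p h
      · exact hsmB p h
    · -- pairwise decoupled
      have cross : ∀ p ∈ PA, ∀ q ∈ PB,
          Disjoint p q ∧ ∀ u ∈ p, ∀ v ∈ q, ¬ G.Adj u v := by
        intro p hp q hq
        have hpA : p ⊆ A := fun x hx =>
          hA'subA (hbA (Finset.mem_biUnion.mpr ⟨p, hp, hx⟩))
        have hqB : q ⊆ B := fun x hx =>
          hB'subB (hbB (Finset.mem_biUnion.mpr ⟨q, hq, hx⟩))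
        exact ⟨hAB.mono hpA hqB, fun u hu v hv => hedge u (hpA hu) v (hqB hv)⟩
      intro p hp q hq hpq
      rcases Finset.mem_union.mp hp with h1 | h1 <;> rcases Finset.mem_union.mp hq with h2 | h2
      · exact hpwA p h1 q h2 hpq
      · exact cross p h1 q h2
      · obtain ⟨hdisj, hedg⟩ := cross q h2 p h1
        exact ⟨hdisj.symm, fun u hu v hv hadj => hedg v hv u hu hadj.symm⟩
      · exact hpwB p h1 q h2 hpq
    · -- cardinality bound
      have hcard : ((AcA ∪ AcB) ∪ Sp').card ≤ AcA.card + AcB.card + Sp'.card := by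
        calc ((AcA ∪ AcB) ∪ Sp').card ≤ (AcA ∪ AcB).card + Sp'.card :=
              Finset.card_union_le _ _
          _ ≤ AcA.card + AcB.card + Sp'.card := by
              have := Finset.card_union_le AcA AcB; omega
      have hSp'card : Sp'.card ≤ s n := by
        have := Finset.card_le_card hSp'subSp; omega
      have hr := hrec n (by omega)
      rw [← hn'] at hr
      omega

/-- Recursive-separation partition: an `s`-separable graph (with balance `α = 1/2`)
can be partitioned into a union `A` of pairwise decoupled pieces, each of size `< d`,
plus a leftover `Aᶜ` of size at most `S_d(|V|)`, where `S_d` satisfies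
`S_d(r) = s(r) + 2·S_d(⌈r/2⌉)` with `S_d(t) = 0` for `t < d`. -/
theorem stmt5_recursive_separation {V : Type*} [Fintype V] [DecidableEq V]
    (G : SimpleGraph V) (s Sd : ℕ → ℕ) (d : ℕ) (hd : d ≤ Fintype.card V)
    (hsep : ∀ V' : Finset V, ∃ A Sp B : Finset V,
      A ∪ Sp ∪ B = V' ∧ Disjoint A Sp ∧ Disjoint A B ∧ Disjoint Sp B ∧
      Sp.card ≤ s V'.card ∧ 2 * A.card ≤ V'.card ∧ 2 * B.card ≤ V'.card ∧
      (∀ u ∈ A, ∀ v ∈ B, ¬ G.Adj u v))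
    (hrec : ∀ r : ℕ, d ≤ r → Sd r = s r + 2 * Sd ((r + 1) / 2))
    (hbase : ∀ t : ℕ, t < d → Sd t = 0) :
    ∃ (P : Finset (Finset V)) (Ac : Finset V),
      (P.biUnion id) ∪ Ac = Finset.univ ∧
      Disjoint (P.biUnion id) Ac ∧
      (∀ p ∈ P, p.card < d) ∧
      (∀ p ∈ P, ∀ q ∈ P, p ≠ q →
        Disjoint p q ∧ ∀ u ∈ p, ∀ v ∈ q, ¬ G.Adj u v) ∧
      Ac.card ≤ Sd (Fintype.card V) := by
  exact aux_recursive_separation G s Sd d hsep hrec (Fintype.card V) le_rfl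
    Finset.univ (le_of_eq Finset.card_univ)
end

section
/- Union Lemma: In a stabilizer code, if {U_i} are pairwise decoupled correctable sets of qubits (a set U is correctable iff every logical operator supported in U is a stabilizer element, equivalently acts trivially on the code), then the union T = ⋃_i U_i is correctable: any logical operator supported in T decomposes as a product of logical operators each supported in one U_i, each of which must be trivial. -/
/-- A Pauli operator on `n` qubits, modulo phase, represented symplectically:
an X-part and a Z-part, each a vector in `F₂ⁿ`. -/
abbrev PauliVec (n : ℕ) := (Fin n → ZMod 2) × (Fin n → ZMod 2)

/-- The standard symplectic form on `F₂^{2n}`: two Pauli operators commute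
iff the form vanishes. -/
def sympForm {n : ℕ} (u v : PauliVec n) : ZMod 2 :=
  ∑ i : Fin n, (u.1 i * v.2 i + u.2 i * v.1 i)

/-- Support of a Pauli operator: the qubits on which it acts nontrivially. -/
def psupp {n : ℕ} (u : PauliVec n) : Finset (Fin n) :=
  Finset.univ.filter fun i => u.1 i ≠ 0 ∨ u.2 i ≠ 0

/-- Restriction of a Pauli operator to a subset `U` of qubits (identity elsewhere). -/
def prestrict {n : ℕ} (u : PauliVec n) (U : Finset (Fin n)) : PauliVec n :=
  (fun i => if i ∈ U then u.1 i else 0, fun i => if i ∈ U then u.2 i else 0)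

/-- Union Lemma: if `{U i}` are pairwise decoupled correctable sets of qubits, then
`T = ⋃ i, U i` is correctable: any logical operator supported in `T` decomposes as the
product of its restrictions to the `U i`, each of which is logical, supported in `U i`,
hence a stabilizer; so the whole operator is a stabilizer. -/
theorem stmt8_union_lemma {n t : ℕ} {ι : Type*}
    (g : ι → PauliVec n)
    (S : Submodule (ZMod 2) (PauliVec n))
    (hS : S = Submodule.span (ZMod 2) (Set.range g))
    (U : Fin t → Finset (Fin n))
    (hdisj : ∀ i j : Fin t, i ≠ j → Disjoint (U i) (U j))
    (hdec : ∀ (a : ι) (i j : Fin t), i ≠ j →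
      (psupp (g a) ∩ U i).Nonempty → psupp (g a) ∩ U j = ∅)
    (hcorr : ∀ (i : Fin t) (L : PauliVec n),
      (∀ a : ι, sympForm L (g a) = 0) → psupp L ⊆ U i → L ∈ S) :
    ∀ L : PauliVec n, (∀ a : ι, sympForm L (g a) = 0) →
      psupp L ⊆ Finset.univ.biUnion (fun i => U i) →
      (L = ∑ i : Fin t, prestrict L (U i)) ∧
      (∀ i : Fin t, prestrict L (U i) ∈ S) ∧
      L ∈ S := by
  intro L hcomm hsupp
  have hL0 : ∀ q, q ∉ Finset.univ.biUnion (fun i => U i) → L.1 q = 0 ∧ L.2 q = 0 := by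
    intro q hq
    have h : q ∉ psupp L := fun h => hq (hsupp h)
    simpa [psupp, not_or] using h
  have key : ∀ (f : Fin n → ZMod 2), (∀ q, q ∉ Finset.univ.biUnion (fun i => U i) → f q = 0) →
      ∀ q, f q = ∑ i : Fin t, (if q ∈ U i then f q else 0) := by
    intro f hf q
    by_cases h : ∃ j, q ∈ U j
    · obtain ⟨j, hj⟩ := h
      rw [Finset.sum_eq_single j]
      · simp [hj]
      · intro b _ hb
        rw [if_neg]
        intro hqb
        exact Finset.disjoint_left.mp (hdisj b j hb) hqb hj
      · simp
    · push_neg at h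
      rw [hf q (by simp [h])]
      simp [h]
  have hdecomp : L = ∑ i : Fin t, prestrict L (U i) := by
    have h1 := key L.1 (fun q hq => (hL0 q hq).1)
    have h2 := key L.2 (fun q hq => (hL0 q hq).2)
    apply Prod.ext
    · funext q
      rw [Prod.fst_sum, Finset.sum_apply]
      simpa [prestrict] using h1 q
    · funext q
      rw [Prod.snd_sum, Finset.sum_apply]
      simpa [prestrict] using h2 q
  have hres : ∀ (i : Fin t) (a : ι), sympForm (prestrict L (U i)) (g a) = 0 := by
    intro i a
    by_cases hne : (psupp (g a) ∩ U i).Nonempty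
    · have hLeq : sympForm (prestrict L (U i)) (g a) = sympForm L (g a) := by
        unfold sympForm prestrict
        apply Finset.sum_congr rfl
        intro q _
        by_cases hq : q ∈ U i
        · simp [hq]
        · simp only [if_neg hq]
          by_cases hLq : q ∈ psupp L
          · obtain ⟨j, hj⟩ : ∃ j, q ∈ U j := by simpa using hsupp hLq
            have hji : j ≠ i := fun h => hq (h ▸ hj)
            have hempty := hdec a i j (Ne.symm hji) hne
            have hg : q ∉ psupp (g a) := by
              intro hqg
              have hmem : q ∈ psupp (g a) ∩ U j := Finset.mem_inter.mpr ⟨hqg, hj⟩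
              rw [hempty] at hmem
              exact absurd hmem (Finset.notMem_empty q)
            have hg1 : (g a).1 q = 0 ∧ (g a).2 q = 0 := by
              simpa [psupp, not_or] using hg
            simp [hg1.1, hg1.2]
          · have hL1 : L.1 q = 0 ∧ L.2 q = 0 := by simpa [psupp, not_or] using hLq
            simp [hL1.1, hL1.2]
      rw [hLeq]; exact hcomm a
    · unfold sympForm prestrict
      apply Finset.sum_eq_zero
      intro q _
      by_cases hq : q ∈ U i
      · have hg : q ∉ psupp (g a) := fun hqg =>
          hne ⟨q, Finset.mem_inter.mpr ⟨hqg, hq⟩⟩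
        have hg1 : (g a).1 q = 0 ∧ (g a).2 q = 0 := by
          simpa [psupp, not_or] using hg
        simp [hq, hg1.1, hg1.2]
      · simp [hq]
  have hsub : ∀ i : Fin t, psupp (prestrict L (U i)) ⊆ U i := by
    intro i q hq
    by_contra h
    simp [psupp, prestrict, h] at hq
  have hmemS : ∀ i : Fin t, prestrict L (U i) ∈ S := fun i =>
    hcorr i _ (hres i) (hsub i)
  exact ⟨hdecomp, hmemS, hdecomp ▸ Submodule.sum_mem S fun i _ => hmemS i⟩
end

section
/- Expansion Lemma: In a stabilizer code, let U and T be correctable sets of qubits with ∂₊T ⊆ U, where ∂₊T is the set of qubits outside T sharing a stabilizer generator with a qubit in T. Then T ∪ U is correctable. (Formally: if every logical operator can be cleaned off U, i.e., has a representative in its coset modulo stabilizers supported in the complement of U, and T is correctable, then every logical operator supported in T ∪ U is a stabilizer.) -/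
open scoped Classical in
/-- Outer boundary of a set `T` of qubits: qubits outside `T` sharing the support of
some stabilizer generator with a qubit of `T`. -/
noncomputable def bdryPlus {n : ℕ} {ι : Type*} (g : ι → PauliVec n)
    (T : Finset (Fin n)) : Finset (Fin n) :=
  Finset.univ.filter fun v => v ∉ T ∧ ∃ a : ι, v ∈ psupp (g a) ∧ (psupp (g a) ∩ T).Nonempty

open Finset

section Symplectic

variable {n : ℕ}

lemma sympForm_comm (u v : PauliVec n) : sympForm u v = sympForm v u :=
  sum_congr rfl fun _ _ => by ring

lemma sympForm_eq_dotProduct (u v : PauliVec n) :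
    sympForm u v = u.1 ⬝ᵥ v.2 + u.2 ⬝ᵥ v.1 := by
  simp only [sympForm, dotProduct, sum_add_distrib]

noncomputable def sympBilin (n : ℕ) : LinearMap.BilinForm (ZMod 2) (PauliVec n) :=
  LinearMap.mk₂ (ZMod 2) sympForm
    (fun _ _ _ => by
      simp only [sympForm_eq_dotProduct, Prod.fst_add, Prod.snd_add, add_dotProduct]; ring)
    (fun _ _ _ => by
      simp only [sympForm_eq_dotProduct, Prod.smul_fst, Prod.smul_snd, smul_dotProduct, smul_add])
    (fun _ _ _ => by
      simp only [sympForm_eq_dotProduct, Prod.fst_add, Prod.snd_add, dotProduct_add]; ring)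
    (fun _ _ _ => by
      simp only [sympForm_eq_dotProduct, Prod.smul_fst, Prod.smul_snd, dotProduct_smul, smul_add])

@[simp]
lemma sympBilin_apply (u v : PauliVec n) : sympBilin n u v = sympForm u v := rfl

lemma sympBilin_isSymm : (sympBilin n).IsSymm :=
  LinearMap.BilinForm.isSymm_def.mpr sympForm_comm

lemma sympBilin_nondegenerate : (sympBilin n).Nondegenerate := by
  refine (sympBilin_isSymm.isRefl.nondegenerate_iff_separatingLeft).mpr fun u hu => ?_
  have hX : ∀ i, u.1 i = 0 := fun i => by
    simpa [sympForm_eq_dotProduct] using hu (0, Pi.single i 1)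
  have hZ : ∀ i, u.2 i = 0 := fun i => by
    simpa [sympForm_eq_dotProduct] using hu (Pi.single i 1, 0)
  exact Prod.ext (funext hX) (funext hZ)

lemma mem_psupp {u : PauliVec n} {i : Fin n} : i ∈ psupp u ↔ u.1 i ≠ 0 ∨ u.2 i ≠ 0 := by
  simp [psupp]

lemma notMem_psupp_iff {u : PauliVec n} {i : Fin n} :
    i ∉ psupp u ↔ u.1 i = 0 ∧ u.2 i = 0 := by
  simp [mem_psupp]

lemma sympForm_eq_zero_of_disjoint {u v : PauliVec n} (h : Disjoint (psupp u) (psupp v)) :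
    sympForm u v = 0 := by
  refine sum_eq_zero fun i _ => ?_
  by_cases hi : i ∈ psupp u
  · obtain ⟨h1, h2⟩ := notMem_psupp_iff.mp (disjoint_left.mp h hi)
    simp [h1, h2]
  · obtain ⟨h1, h2⟩ := notMem_psupp_iff.mp hi
    simp [h1, h2]

lemma psupp_prestrict (u : PauliVec n) (T : Finset (Fin n)) :
    psupp (prestrict u T) = psupp u ∩ T := by
  ext i; by_cases hi : i ∈ T <;> simp [mem_psupp, prestrict, hi]

lemma psupp_sub_prestrict (u : PauliVec n) (T : Finset (Fin n)) :
    psupp (u - prestrict u T) = psupp u \ T := by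
  ext i; by_cases hi : i ∈ T <;> simp [mem_psupp, prestrict, hi]

end Symplectic

section StabilizerCode

variable {n : ℕ} {ι : Type*} (g : ι → PauliVec n)

def IsLogical (L : PauliVec n) : Prop := ∀ a, sympForm L (g a) = 0

variable {g}

lemma IsLogical.sympForm_eq_zero_of_mem_span {L s : PauliVec n} (hL : IsLogical g L)
    (hs : s ∈ Submodule.span (ZMod 2) (Set.range g)) : sympForm L s = 0 := by
  have : Submodule.span (ZMod 2) (Set.range g) ≤ LinearMap.ker (sympBilin n L) := by
    rw [Submodule.span_le]
    rintro _ ⟨a, rfl⟩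
    exact hL a
  exact this hs

lemma mem_span_of_forall_isLogical_sympForm_eq_zero {L : PauliVec n}
    (h : ∀ M, IsLogical g M → sympForm L M = 0) :
    L ∈ Submodule.span (ZMod 2) (Set.range g) := by
  rw [← LinearMap.BilinForm.orthogonal_orthogonal sympBilin_nondegenerate
    sympBilin_isSymm.isRefl (Submodule.span (ZMod 2) (Set.range g)),
    LinearMap.BilinForm.mem_orthogonal_iff]
  intro M hM
  have hMlog : IsLogical g M := fun a => by
    rw [sympForm_comm]
    exact LinearMap.BilinForm.mem_orthogonal_iff.mp hM _ (Submodule.subset_span ⟨a, rfl⟩)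
  rw [sympBilin_apply, sympForm_comm]
  exact h M hMlog

lemma psupp_subset_union_bdryPlus {T : Finset (Fin n)} {a : ι}
    (ha : (psupp (g a) ∩ T).Nonempty) : psupp (g a) ⊆ T ∪ bdryPlus g T := by
  intro v hv
  by_cases hvT : v ∈ T
  · exact mem_union_left _ hvT
  · exact mem_union_right _ (by simpa [bdryPlus, hvT] using ⟨a, hv, ha⟩)

/-- A generator meeting `T` lies in `T ∪ ∂₊T ⊆ T ∪ U`, where `M - M|_T` vanishes. -/
lemma IsLogical.prestrict_of_disjoint {M : PauliVec n} {U T : Finset (Fin n)}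
    (hM : IsLogical g M) (hMU : Disjoint (psupp M) U) (hbd : bdryPlus g T ⊆ U) :
    IsLogical g (prestrict M T) := by
  intro a
  by_cases ha : (psupp (g a) ∩ T).Nonempty
  · have hrest : sympForm (M - prestrict M T) (g a) = 0 := by
      refine sympForm_eq_zero_of_disjoint (disjoint_left.mpr fun v hv hva => ?_)
      rw [psupp_sub_prestrict, mem_sdiff] at hv
      rcases mem_union.mp (psupp_subset_union_bdryPlus ha hva) with hvT | hvB
      · exact hv.2 hvT
      · exact disjoint_left.mp hMU hv.1 (hbd hvB)
    rw [← sympBilin_apply, map_sub, LinearMap.sub_apply, sympBilin_apply, sympBilin_apply,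
      hM a, zero_sub, neg_eq_zero] at hrest
    exact hrest
  · refine sympForm_eq_zero_of_disjoint (disjoint_left.mpr fun v hv hva => ha ⟨v, ?_⟩)
    rw [psupp_prestrict] at hv
    exact mem_inter.mpr ⟨hva, (mem_inter.mp hv).2⟩

lemma exists_clean_off_union {U T : Finset (Fin n)}
    (hclean : ∀ L, IsLogical g L → ∃ L', IsLogical g L' ∧
      L - L' ∈ Submodule.span (ZMod 2) (Set.range g) ∧ psupp L' ∩ U = ∅)
    (hTcorr : ∀ L, IsLogical g L → psupp L ⊆ T →
      L ∈ Submodule.span (ZMod 2) (Set.range g))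
    (hbd : bdryPlus g T ⊆ U) {M : PauliVec n} (hM : IsLogical g M) :
    ∃ M', M - M' ∈ Submodule.span (ZMod 2) (Set.range g) ∧ Disjoint (psupp M') (T ∪ U) := by
  obtain ⟨M', hM'log, hMM', hM'U⟩ := hclean M hM
  rw [← disjoint_iff_inter_eq_empty] at hM'U
  have hM'T := hTcorr _ (hM'log.prestrict_of_disjoint hM'U hbd) (by simp [psupp_prestrict])
  refine ⟨M' - prestrict M' T, ?_, ?_⟩
  · rw [show M - (M' - prestrict M' T) = M - M' + prestrict M' T by abel]
    exact add_mem hMM' hM'T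
  rw [psupp_sub_prestrict, disjoint_union_right]
  exact ⟨sdiff_disjoint, disjoint_of_subset_left sdiff_subset hM'U⟩

end StabilizerCode

theorem stmt9_expansion_lemma_general {n : ℕ} {ι : Type*}
    (g : ι → PauliVec n)
    (S : Submodule (ZMod 2) (PauliVec n))
    (hS : S = Submodule.span (ZMod 2) (Set.range g))
    (U T : Finset (Fin n))
    (hclean : ∀ L : PauliVec n, (∀ a : ι, sympForm L (g a) = 0) →
      ∃ L' : PauliVec n, (∀ a : ι, sympForm L' (g a) = 0) ∧ L - L' ∈ S ∧
        psupp L' ∩ U = ∅)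
    (hTcorr : ∀ L : PauliVec n, (∀ a : ι, sympForm L (g a) = 0) →
      psupp L ⊆ T → L ∈ S)
    (hbd : bdryPlus g T ⊆ U) :
    ∀ L : PauliVec n, (∀ a : ι, sympForm L (g a) = 0) →
      psupp L ⊆ T ∪ U → L ∈ S := by
  subst hS
  intro L hL hLsupp
  refine mem_span_of_forall_isLogical_sympForm_eq_zero fun M hM => ?_
  obtain ⟨M', hMM', hM'⟩ := exists_clean_off_union hclean hTcorr hbd hM
  have hLM' : sympForm L M' = 0 :=
    sympForm_eq_zero_of_disjoint (disjoint_of_subset_left hLsupp hM'.symm)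
  calc sympForm L M = sympForm L (M - M') + sympForm L M' := by
        simpa only [sympBilin_apply, sub_add_cancel] using (sympBilin n L).map_add (M - M') M'
    _ = 0 := by rw [IsLogical.sympForm_eq_zero_of_mem_span hL hMM', hLM', add_zero]

/-- Expansion Lemma: if every logical operator can be cleaned off `U` (has a
representative modulo stabilizers supported in the complement of `U`), `T` is
correctable, and `∂₊T ⊆ U`, then `T ∪ U` is correctable: every logical operator
supported in `T ∪ U` is a stabilizer. -/
theorem stmt9_expansion_lemma {n : ℕ} {ι : Type*}
    (g : ι → PauliVec n)
    (S : Submodule (ZMod 2) (PauliVec n))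
    (hS : S = Submodule.span (ZMod 2) (Set.range g))
    (hiso : ∀ a b : ι, sympForm (g a) (g b) = 0)
    (U T : Finset (Fin n))
    (hclean : ∀ L : PauliVec n, (∀ a : ι, sympForm L (g a) = 0) →
      ∃ L' : PauliVec n, (∀ a : ι, sympForm L' (g a) = 0) ∧ L - L' ∈ S ∧
        psupp L' ∩ U = ∅)
    (hTcorr : ∀ L : PauliVec n, (∀ a : ι, sympForm L (g a) = 0) →
      psupp L ⊆ T → L ∈ S)
    (hbd : bdryPlus g T ⊆ U) :
    ∀ L : PauliVec n, (∀ a : ι, sympForm L (g a) = 0) →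
      psupp L ⊆ T ∪ U → L ∈ S :=
  stmt9_expansion_lemma_general g S hS U T hclean hTcorr hbd
end

section
/- If a stabilizer code family {𝒞_n} of parameters [[n, k, d]] has connectivity graphs that are s-separable with s(r) ≤ C·r^c for constants C > 0 and 0 < c < 1, then k·d^{2(1-c)} = O(n); i.e., there exists a constant C' with k ≤ C'·d^{2(c-1)}·n for all n. -/
/-! Splitting the qubits recursively with balanced separators until every piece has fewer than `d`
qubits removes `O(d^(c-1) n)` separator qubits `R₁`; the rest is a union of mutually decoupled
pieces too small to carry a logical operator, hence correctable. Splitting `R₁` in the same way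
gives a correctable `R₁ \ R₂` with `|R₂| = O(d^(2(c-1)) n)`. By the cleaning lemma every logical
operator is equivalent to one supported off the first correctable region; the part of such
operators that vanishes on `R₂` lives in the second correctable region, so a dimension count gives
`k ≤ |R₂|`. -/

lemma Submodule.finrank_eq_finrank_map_add_finrank_inf_ker {K V W : Type*} [Field K]
    [AddCommGroup V] [Module K V] [FiniteDimensional K V] [AddCommGroup W] [Module K W]
    (M : Submodule K V) (f : V →ₗ[K] W) :
    Module.finrank K M = Module.finrank K (M.map f) + Module.finrank K ↥(M ⊓ LinearMap.ker f) := by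
  rw [← (f.domRestrict M).finrank_range_add_finrank_ker, LinearMap.range_domRestrict,
    LinearMap.ker_domRestrict, ← Submodule.finrank_map_subtype_eq, Submodule.map_comap_subtype]

namespace StabilizerCode

variable {n : ℕ}

lemma sympForm_comm (u v : PauliVec n) : sympForm u v = sympForm v u :=
  Finset.sum_congr rfl fun _ _ => by ring

def sympBilin (n : ℕ) : LinearMap.BilinForm (ZMod 2) (PauliVec n) :=
  LinearMap.mk₂ (ZMod 2) sympForm
    (fun _ _ _ => by
      simp only [sympForm, Prod.fst_add, Prod.snd_add, Pi.add_apply, ← Finset.sum_add_distrib]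
      exact Finset.sum_congr rfl fun _ _ => by ring)
    (fun _ _ _ => by
      simp only [sympForm, Prod.smul_fst, Prod.smul_snd, Pi.smul_apply, smul_eq_mul, Finset.mul_sum]
      exact Finset.sum_congr rfl fun _ _ => by ring)
    (fun _ _ _ => by
      simp only [sympForm, Prod.fst_add, Prod.snd_add, Pi.add_apply, ← Finset.sum_add_distrib]
      exact Finset.sum_congr rfl fun _ _ => by ring)
    (fun _ _ _ => by
      simp only [sympForm, Prod.smul_fst, Prod.smul_snd, Pi.smul_apply, smul_eq_mul, Finset.mul_sum]
      exact Finset.sum_congr rfl fun _ _ => by ring)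

@[simp] lemma sympBilin_apply (u v : PauliVec n) : sympBilin n u v = sympForm u v := rfl

lemma sympBilin_isRefl : (sympBilin n).IsRefl := fun u v h => by
  rwa [sympBilin_apply, sympForm_comm] at h

lemma sympBilin_nondegenerate : (sympBilin n).Nondegenerate := by
  refine sympBilin_isRefl.nondegenerate_iff_separatingLeft.mpr fun u hu => ?_
  ext i
  · simpa [sympForm, Pi.single_apply] using hu (0, Pi.single i 1)
  · simpa [sympForm, Pi.single_apply] using hu (Pi.single i 1, 0)

lemma finrank_pauliVec : Module.finrank (ZMod 2) (PauliVec n) = 2 * n := by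
  simp [two_mul]

lemma notMem_psupp {u : PauliVec n} {i : Fin n} : i ∉ psupp u ↔ u.1 i = 0 ∧ u.2 i = 0 := by
  simp [psupp]

def supportedOn (U : Finset (Fin n)) : Submodule (ZMod 2) (PauliVec n) :=
  (Submodule.pi (↑U)ᶜ fun _ => ⊥).prod (Submodule.pi (↑U)ᶜ fun _ => ⊥)

lemma mem_supportedOn {U : Finset (Fin n)} {v : PauliVec n} :
    v ∈ supportedOn U ↔ ∀ i ∉ U, v.1 i = 0 ∧ v.2 i = 0 := by
  simp [supportedOn, Submodule.mem_pi, forall_and]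

lemma mem_supportedOn_iff_psupp_subset {U : Finset (Fin n)} {v : PauliVec n} :
    v ∈ supportedOn U ↔ psupp v ⊆ U := by
  simp only [mem_supportedOn, ← notMem_psupp]
  exact forall_congr' fun _ => not_imp_not

lemma supportedOn_mono {U W : Finset (Fin n)} (h : U ⊆ W) : supportedOn U ≤ supportedOn W :=
  fun _ hv => mem_supportedOn_iff_psupp_subset.2 ((mem_supportedOn_iff_psupp_subset.1 hv).trans h)

lemma supportedOn_inf (U W : Finset (Fin n)) :
    supportedOn U ⊓ supportedOn W = supportedOn (U ∩ W) := by
  ext v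
  simp only [Submodule.mem_inf, mem_supportedOn_iff_psupp_subset, Finset.subset_inter_iff]

lemma finrank_supportedOn_le (U : Finset (Fin n)) :
    Module.finrank (ZMod 2) (supportedOn U) ≤ 2 * U.card := by
  let f : PauliVec n →ₗ[ZMod 2] (U → ZMod 2) × (U → ZMod 2) :=
    (LinearMap.funLeft (ZMod 2) (ZMod 2) Subtype.val).prodMap
      (LinearMap.funLeft (ZMod 2) (ZMod 2) Subtype.val)
  have hf : Function.Injective (f.domRestrict (supportedOn U)) := by
    rintro ⟨x, hx⟩ ⟨y, hy⟩ hxy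
    rw [mem_supportedOn] at hx hy
    have h1 := congrArg Prod.fst hxy
    have h2 := congrArg Prod.snd hxy
    ext i <;> by_cases hi : i ∈ U
    · exact congrFun h1 ⟨i, hi⟩
    · rw [(hx i hi).1, (hy i hi).1]
    · exact congrFun h2 ⟨i, hi⟩
    · rw [(hx i hi).2, (hy i hi).2]
  simpa [two_mul] using LinearMap.finrank_le_finrank_of_injective hf

def prestrictₗ (U : Finset (Fin n)) : PauliVec n →ₗ[ZMod 2] PauliVec n where
  toFun v := prestrict v U
  map_add' u v := by ext i <;> by_cases hi : i ∈ U <;> simp [prestrict, hi]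
  map_smul' r v := by ext i <;> by_cases hi : i ∈ U <;> simp [prestrict, hi]

@[simp] lemma prestrictₗ_apply (U : Finset (Fin n)) (v : PauliVec n) :
    prestrictₗ U v = prestrict v U := rfl

lemma prestrict_mem_supportedOn (v : PauliVec n) (U : Finset (Fin n)) :
    prestrict v U ∈ supportedOn U :=
  mem_supportedOn.2 fun i hi => by simp [prestrict, hi]

lemma sub_prestrict_mem_supportedOn_compl (v : PauliVec n) (U : Finset (Fin n)) :
    v - prestrict v U ∈ supportedOn Uᶜ :=
  mem_supportedOn.2 fun i hi => by simp_all [prestrict]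

lemma prestrict_eq_zero_iff {v : PauliVec n} {U : Finset (Fin n)} :
    prestrict v U = 0 ↔ v ∈ supportedOn Uᶜ := by
  simp only [mem_supportedOn, Finset.mem_compl, not_not, prestrict, Prod.ext_iff, funext_iff,
    Prod.fst_zero, Prod.snd_zero, Pi.zero_apply]
  refine ⟨fun h i hi => ⟨by simpa [hi] using h.1 i, by simpa [hi] using h.2 i⟩, fun h => ?_⟩
  constructor <;> intro i <;> split_ifs with hi
  exacts [(h i hi).1, rfl, (h i hi).2, rfl]

lemma sympForm_prestrict_left (u v : PauliVec n) (U : Finset (Fin n)) :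
    sympForm (prestrict u U) v = sympForm u (prestrict v U) :=
  Finset.sum_congr rfl fun i _ => by by_cases hi : i ∈ U <;> simp [prestrict, hi]

lemma sympForm_prestrict_of_inter_subset {u v : PauliVec n} {U : Finset (Fin n)}
    (h : psupp u ∩ psupp v ⊆ U) : sympForm u (prestrict v U) = sympForm u v := by
  refine Finset.sum_congr rfl fun i _ => ?_
  by_cases hi : i ∈ U
  · simp [prestrict, hi]
  · have : i ∉ psupp u ∨ i ∉ psupp v := by
      by_contra! h'
      exact hi (h (Finset.mem_inter.2 h'))
    rcases this with hu | hv <;> simp_all [notMem_psupp, prestrict]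

lemma sympForm_eq_zero_of_disjoint {u v : PauliVec n} (h : Disjoint (psupp u) (psupp v)) :
    sympForm u v = 0 := by
  have := sympForm_prestrict_of_inter_subset (U := ∅) (Finset.disjoint_iff_inter_eq_empty.1 h).le
  rw [← this]
  simp [sympForm, prestrict]


section Code

variable {ι : Type*} (g : ι → PauliVec n)

abbrev stabilizerSpace : Submodule (ZMod 2) (PauliVec n) :=
  Submodule.span (ZMod 2) (Set.range g)

def centralizerSpace : Submodule (ZMod 2) (PauliVec n) :=
  (sympBilin n).orthogonal (stabilizerSpace g)

variable {g}

lemma mem_centralizerSpace {v : PauliVec n} :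
    v ∈ centralizerSpace g ↔ ∀ a, sympForm v (g a) = 0 := by
  simp only [centralizerSpace, LinearMap.BilinForm.mem_orthogonal_iff, sympBilin_apply]
  refine ⟨fun h a => ?_, fun h w hw => ?_⟩
  · rw [sympForm_comm]
    exact h _ (Submodule.subset_span ⟨a, rfl⟩)
  · have : stabilizerSpace g ≤ LinearMap.ker ((sympBilin n).flip v) :=
      Submodule.span_le.2 <| by rintro _ ⟨a, rfl⟩; simp [sympForm_comm, h a]
    exact this hw

lemma stabilizerSpace_le_centralizerSpace (hg : ∀ a b, sympForm (g a) (g b) = 0) :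
    stabilizerSpace g ≤ centralizerSpace g := by
  rw [Submodule.span_le]
  rintro _ ⟨a, rfl⟩
  exact mem_centralizerSpace.2 (hg a)

lemma finrank_centralizerSpace :
    Module.finrank (ZMod 2) (centralizerSpace g) = 2 * n - Module.finrank (ZMod 2) (stabilizerSpace g) := by
  rw [centralizerSpace, LinearMap.BilinForm.finrank_orthogonal sympBilin_nondegenerate,
    finrank_pauliVec]

def Correctable (g : ι → PauliVec n) (U : Finset (Fin n)) : Prop :=
  ∀ v ∈ centralizerSpace g, v ∈ supportedOn U → v ∈ stabilizerSpace g

lemma Correctable.mono {U W : Finset (Fin n)} (hW : Correctable g W) (h : U ⊆ W) :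
    Correctable g U :=
  fun v hv hvU => hW v hv (supportedOn_mono h hvU)

lemma correctable_of_card_lt {d : ℕ}
    (hdist : ∀ L ∈ centralizerSpace g, L ∉ stabilizerSpace g → d ≤ (psupp L).card)
    {U : Finset (Fin n)} (hU : U.card < d) : Correctable g U := fun v hv hvU => by
  by_contra hvS
  have := Finset.card_le_card (mem_supportedOn_iff_psupp_subset.1 hvU)
  have := hdist v hv hvS
  omega

lemma Correctable.union {U W : Finset (Fin n)} (hU : Correctable g U) (hW : Correctable g W)
    (hUW : ∀ u ∈ U, ∀ w ∈ W, ∀ a, ¬(u ∈ psupp (g a) ∧ w ∈ psupp (g a))) :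
    Correctable g (U ∪ W) := by
  intro v hv hvUW
  -- A generator meeting `U` misses `W`, so it sees `v` only through `v|U`.
  have hvU : prestrict v U ∈ centralizerSpace g := by
    refine mem_centralizerSpace.2 fun a => ?_
    rw [sympForm_comm]
    by_cases hmeet : ∃ u ∈ U, u ∈ psupp (g a)
    · obtain ⟨u, huU, hua⟩ := hmeet
      rw [sympForm_prestrict_of_inter_subset, sympForm_comm]
      · exact mem_centralizerSpace.1 hv a
      · intro i hi
        rw [Finset.mem_inter] at hi
        rcases Finset.mem_union.1 (mem_supportedOn_iff_psupp_subset.1 hvUW hi.2) with h | h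
        · exact h
        · exact absurd ⟨hua, hi.1⟩ (hUW u huU i h a)
    · simp only [not_exists, not_and] at hmeet
      refine sympForm_eq_zero_of_disjoint (Finset.disjoint_left.2 fun i hia hiv => ?_)
      exact hmeet i (mem_supportedOn_iff_psupp_subset.1 (prestrict_mem_supportedOn v U) hiv) hia
  have hvW : v - prestrict v U ∈ supportedOn W := by
    have hvU' : prestrict v U ∈ supportedOn (U ∪ W) :=
      supportedOn_mono Finset.subset_union_left (prestrict_mem_supportedOn v U)
    have : v - prestrict v U ∈ supportedOn ((U ∪ W) ∩ Uᶜ) := by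
      rw [← supportedOn_inf]
      exact ⟨sub_mem hvUW hvU', sub_prestrict_mem_supportedOn_compl v U⟩
    refine supportedOn_mono (fun i hi => ?_) this
    simp only [Finset.mem_inter, Finset.mem_union, Finset.mem_compl] at hi
    tauto
  rw [← add_sub_cancel (prestrict v U) v]
  exact add_mem (hU _ hvU (prestrict_mem_supportedOn v U)) (hW _ (sub_mem hv hvU) hvW)

lemma Correctable.centralizerSpace_le_sup (hg : ∀ a b, sympForm (g a) (g b) = 0)
    {U : Finset (Fin n)} (hU : Correctable g U) :
    centralizerSpace g ≤ stabilizerSpace g ⊔ (centralizerSpace g ⊓ supportedOn Uᶜ) := by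
  intro L hL
  -- `L|U` is orthogonal to every `y` orthogonal to the restricted stabilizers, because such
  -- a `y` has `y|U` in the centralizer, supported on `U`, hence a stabilizer.
  have hLU : prestrict L U ∈ (stabilizerSpace g).map (prestrictₗ U) := by
    rw [← LinearMap.BilinForm.orthogonal_orthogonal sympBilin_nondegenerate sympBilin_isRefl
      ((stabilizerSpace g).map (prestrictₗ U))]
    intro y hy
    have hyU : prestrict y U ∈ centralizerSpace g := fun m hm => by
      simpa [sympForm_prestrict_left] using hy _ ⟨m, hm, rfl⟩
    rw [sympBilin_apply, ← sympForm_prestrict_left]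
    exact hL _ (hU _ hyU (prestrict_mem_supportedOn y U))
  obtain ⟨s, hs, hsL⟩ := hLU
  have hLs : L - s ∈ supportedOn Uᶜ := by
    rw [← prestrict_eq_zero_iff, ← prestrictₗ_apply, map_sub, prestrictₗ_apply, ← hsL, sub_self]
  rw [← add_sub_cancel s L]
  exact Submodule.add_mem_sup hs ⟨sub_mem hL (stabilizerSpace_le_centralizerSpace hg hs), hLs⟩

theorem le_finrank_stabilizerSpace_add_card (hg : ∀ a b, sympForm (g a) (g b) = 0)
    {A B R : Finset (Fin n)} (hA : Correctable g A) (hB : Correctable g B)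
    (hcover : ∀ i, i ∈ A ∨ i ∈ B ∨ i ∈ R) :
    n ≤ Module.finrank (ZMod 2) (stabilizerSpace g) + R.card := by
  set S := stabilizerSpace g
  set M := centralizerSpace g ⊓ supportedOn Aᶜ
  have hker : M ⊓ LinearMap.ker (prestrictₗ R) ≤ S ⊓ M := by
    rintro x ⟨hxM, hxR⟩
    refine ⟨hB x hxM.1 (supportedOn_mono (U := Aᶜ ∩ Rᶜ) ?_ ?_), hxM⟩
    · intro i
      simp only [Finset.mem_inter, Finset.mem_compl]
      have := hcover i
      tauto
    · rw [← supportedOn_inf]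
      exact ⟨hxM.2, prestrict_eq_zero_iff.1 hxR⟩
  have hmap : M.map (prestrictₗ R) ≤ supportedOn R :=
    Submodule.map_le_iff_le_comap.2 fun x _ => prestrict_mem_supportedOn x R
  have h1 : Module.finrank (ZMod 2) (centralizerSpace g) ≤ Module.finrank (ZMod 2) ↥(S ⊔ M) :=
    Submodule.finrank_mono (hA.centralizerSpace_le_sup hg)
  have h2 := Submodule.finrank_sup_add_finrank_inf_eq S M
  have h3 := M.finrank_eq_finrank_map_add_finrank_inf_ker (prestrictₗ R)
  have h4 := Submodule.finrank_mono hker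
  have h5 := (Submodule.finrank_mono hmap).trans (finrank_supportedOn_le R)
  have h6 : Module.finrank (ZMod 2) (centralizerSpace g) = 2 * n - Module.finrank (ZMod 2) S :=
    finrank_centralizerSpace
  have h7 : Module.finrank (ZMod 2) S ≤ 2 * n := finrank_pauliVec (n := n) ▸ Submodule.finrank_le S
  -- 2n - dim S = dim Z ≤ dim (S ⊔ M) = dim S + dim M - dim (S ⊓ M) ≤ dim S + 2 |R|
  omega

-- `s`-separability of the connectivity graph, in which two qubits are adjacent when some
-- generator acts on both.
def Separable (g : ι → PauliVec n) (s : ℕ → ℝ) : Prop :=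
  ∀ V : Finset (Fin n), ∃ A Sp B : Finset (Fin n),
    A ∪ Sp ∪ B = V ∧ Disjoint A Sp ∧ Disjoint A B ∧ Disjoint Sp B ∧
    2 * A.card ≤ V.card ∧ 2 * B.card ≤ V.card ∧
    (Sp.card : ℝ) ≤ s V.card ∧
    (∀ u ∈ A, ∀ v ∈ B, ¬(u ≠ v ∧ ∃ a, u ∈ psupp (g a) ∧ v ∈ psupp (g a)))

end Code

/-- Closed-form solution of the recursion `S(r) ≥ C r^c + S(r₁) + S(r₂)` (for `r ≥ d` and
`r₁, r₂ ≤ r / 2`) for the number of separator qubits removed from `r` qubits until all pieces have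
fewer than `d` qubits; `t` stands for `d^(c-1)`. -/
noncomputable def residualBound (C K c t r : ℝ) : ℝ :=
  r * max 0 ((C + K) * t - K * r ^ (c - 1))

section ResidualBound

variable {C K c t : ℝ}

lemma residualBound_nonneg {r : ℝ} (hr : 0 ≤ r) : 0 ≤ residualBound C K c t r :=
  mul_nonneg hr (le_max_left _ _)

lemma residualBound_le {r : ℝ} (hCK : 0 ≤ (C + K) * t) (hK : 0 ≤ K) (hr : 0 ≤ r) :
    residualBound C K c t r ≤ (C + K) * t * r := by
  rw [residualBound, mul_comm _ r]
  exact mul_le_mul_of_nonneg_left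
    (max_le hCK (sub_le_self _ (mul_nonneg hK (Real.rpow_nonneg hr _)))) hr

lemma residualBound_le_of_two_mul_le {x r : ℝ} (hc : c ≤ 1) (hK : 0 ≤ K) (hx : 0 ≤ x)
    (hxr : 2 * x ≤ r) :
    residualBound C K c t x ≤ x * max 0 ((C + K) * t - K * (r / 2) ^ (c - 1)) := by
  rcases hx.eq_or_lt with rfl | hx
  · simp [residualBound]
  have : (r / 2) ^ (c - 1) ≤ x ^ (c - 1) :=
    Real.rpow_le_rpow_of_nonpos hx (by linarith) (by linarith)
  exact mul_le_mul_of_nonneg_left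
    (max_le_max le_rfl (sub_le_sub_left (mul_le_mul_of_nonneg_left this hK) _)) hx.le

lemma add_residualBound_add_le {r r₁ r₂ : ℝ} (hC : 0 ≤ C) (hc : c ≤ 1) (hK : 0 ≤ K)
    (hCK : C + K ≤ K * 2 ^ (1 - c)) (hr : 0 < r) (hrt : r ^ (c - 1) ≤ t)
    (h₁ : 0 ≤ r₁) (h₂ : 0 ≤ r₂) (h₁r : 2 * r₁ ≤ r) (h₂r : 2 * r₂ ≤ r) (h₁₂ : r₁ + r₂ ≤ r) :
    C * r ^ c + residualBound C K c t r₁ + residualBound C K c t r₂ ≤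
      residualBound C K c t r := by
  set y := r ^ (c - 1) with hy_def
  have hy : 0 ≤ y := Real.rpow_nonneg hr.le _
  have hrc : r ^ c = r * y := by
    rw [hy_def, Real.rpow_sub_one hr.ne', mul_div_cancel₀ _ hr.ne']
  have hhalf : (r / 2) ^ (c - 1) = 2 ^ (1 - c) * y := by
    rw [Real.div_rpow hr.le zero_le_two, div_eq_mul_inv, ← Real.rpow_neg zero_le_two, neg_sub,
      mul_comm]
  set m := max 0 ((C + K) * t - K * (r / 2) ^ (c - 1)) with hm_def
  have hm : 0 ≤ m := le_max_left _ _
  have key : C * y + m ≤ max 0 ((C + K) * t - K * y) := by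
    rcases le_total ((C + K) * t - K * (r / 2) ^ (c - 1)) 0 with h | h
    · rw [hm_def, max_eq_left h]
      exact le_max_of_le_right (by nlinarith)
    · rw [hm_def, max_eq_right h, hhalf]
      exact le_max_of_le_right (by nlinarith)
  calc C * r ^ c + residualBound C K c t r₁ + residualBound C K c t r₂
      ≤ C * (r * y) + r₁ * m + r₂ * m := by
        rw [hrc]
        gcongr
        exacts [residualBound_le_of_two_mul_le hc hK h₁ h₁r,
          residualBound_le_of_two_mul_le hc hK h₂ h₂r]
    _ ≤ r * (C * y + m) := by nlinarith [mul_le_mul_of_nonneg_right h₁₂ hm]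
    _ ≤ residualBound C K c t r := mul_le_mul_of_nonneg_left key hr.le

end ResidualBound

theorem Separable.exists_correctable_sdiff {ι : Type*} {g : ι → PauliVec n} {C c K : ℝ}
    (hC : 0 ≤ C) (hc : c ≤ 1) (hK : 0 ≤ K) (hCK : C + K ≤ K * 2 ^ (1 - c))
    (hsep : Separable g fun r => C * (r : ℝ) ^ c) {d : ℕ} (hd : 1 ≤ d)
    (hsmall : ∀ U : Finset (Fin n), U.card < d → Correctable g U) (V : Finset (Fin n)) :
    ∃ R ⊆ V, Correctable g (V \ R) ∧
      (R.card : ℝ) ≤ residualBound C K c ((d : ℝ) ^ (c - 1)) V.card := by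
  induction V using Finset.strongInduction with
  | _ V ih =>
  by_cases hVd : V.card < d
  · exact ⟨∅, Finset.empty_subset V, by simpa using hsmall V hVd,
      by simpa using residualBound_nonneg (Nat.cast_nonneg _)⟩
  rw [not_lt] at hVd
  obtain ⟨A, Sp, B, hV, -, hAB, -, hA, hB, hSp, hdec⟩ := hsep V
  have hAV : A ⊆ V := hV ▸ Finset.subset_union_left.trans Finset.subset_union_left
  have hBV : B ⊆ V := hV ▸ Finset.subset_union_right
  have hSpV : Sp ⊆ V := hV ▸ Finset.subset_union_right.trans Finset.subset_union_left
  have hAB_card : A.card + B.card ≤ V.card := by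
    rw [← Finset.card_union_of_disjoint hAB]
    exact Finset.card_le_card (Finset.union_subset hAV hBV)
  obtain ⟨R₁, hR₁A, hA₁, hR₁⟩ :=
    ih A (Finset.ssubset_iff_subset_ne.2 ⟨hAV, fun h => by rw [h] at hA; omega⟩)
  obtain ⟨R₂, hR₂B, hB₂, hR₂⟩ :=
    ih B (Finset.ssubset_iff_subset_ne.2 ⟨hBV, fun h => by rw [h] at hB; omega⟩)
  refine ⟨Sp ∪ R₁ ∪ R₂, ?_, (hA₁.union hB₂ ?_).mono ?_, ?_⟩
  · exact Finset.union_subset (Finset.union_subset hSpV (hR₁A.trans hAV)) (hR₂B.trans hBV)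
  · intro u hu w hw a h
    have hu := Finset.sdiff_subset hu
    have hw := Finset.sdiff_subset hw
    exact hdec u hu w hw ⟨fun huw => Finset.disjoint_left.1 hAB hu (huw ▸ hw), a, h⟩
  · intro i
    simp only [← hV, Finset.mem_sdiff, Finset.mem_union]
    tauto
  · have hVpos : (0 : ℝ) < V.card := by exact_mod_cast (show 0 < V.card by omega)
    calc ((Sp ∪ R₁ ∪ R₂).card : ℝ)
        ≤ Sp.card + R₁.card + R₂.card := by
          exact_mod_cast (Finset.card_union_le _ _).trans
            (Nat.add_le_add_right (Finset.card_union_le _ _) _)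
      _ ≤ C * (V.card : ℝ) ^ c + residualBound C K c ((d : ℝ) ^ (c - 1)) A.card +
            residualBound C K c ((d : ℝ) ^ (c - 1)) B.card := by gcongr
      _ ≤ residualBound C K c ((d : ℝ) ^ (c - 1)) V.card :=
          add_residualBound_add_le hC hc hK hCK hVpos
            (Real.rpow_le_rpow_of_nonpos (by exact_mod_cast hd) (by exact_mod_cast hVd)
              (by linarith))
            (Nat.cast_nonneg _) (Nat.cast_nonneg _) (by exact_mod_cast hA)
            (by exact_mod_cast hB) (by exact_mod_cast hAB_card)

end StabilizerCode

open StabilizerCode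

theorem stmt14_dimension_bound_general (C c : ℝ) (hC : 0 < C) (hc1 : c < 1) :
    ∃ C' : ℝ, 0 < C' ∧
      ∀ (n : ℕ) (ι : Type) [Fintype ι] (g : ι → PauliVec n),
        (∀ a b : ι, sympForm (g a) (g b) = 0) →
        ∀ d : ℕ, 1 ≤ d →
          -- d lower-bounds the weight of every nontrivial logical operator
          (∀ L : PauliVec n, (∀ a : ι, sympForm L (g a) = 0) →
            L ∉ Submodule.span (ZMod 2) (Set.range g) → d ≤ (psupp L).card) →
          -- every induced subgraph of the connectivity graph has a balanced
          -- separator of size at most C·r^c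
          (∀ V' : Finset (Fin n), ∃ A Sp B : Finset (Fin n),
            A ∪ Sp ∪ B = V' ∧ Disjoint A Sp ∧ Disjoint A B ∧ Disjoint Sp B ∧
            2 * A.card ≤ V'.card ∧ 2 * B.card ≤ V'.card ∧
            (Sp.card : ℝ) ≤ C * (V'.card : ℝ) ^ c ∧
            (∀ u ∈ A, ∀ v ∈ B,
              ¬(u ≠ v ∧ ∃ a : ι, u ∈ psupp (g a) ∧ v ∈ psupp (g a)))) →
          ((n - Module.finrank (ZMod 2)
              (Submodule.span (ZMod 2) (Set.range g)) : ℕ) : ℝ) ≤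
            C' * (d : ℝ) ^ (2 * (c - 1)) * (n : ℝ) := by
  have h2c : 1 < (2 : ℝ) ^ (1 - c) := Real.one_lt_rpow one_lt_two (by linarith)
  set K := C / (2 ^ (1 - c) - 1)
  have hK : 0 ≤ K := (div_pos hC (by linarith)).le
  have hCK : C + K ≤ K * 2 ^ (1 - c) := by
    have : K * (2 ^ (1 - c) - 1) = C := div_mul_cancel₀ _ (by linarith)
    linarith
  refine ⟨(C + K) ^ 2, by positivity, fun n ι _ g hg d hd hdist hsep => ?_⟩
  have hsmall (U : Finset (Fin n)) : U.card < d → Correctable g U :=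
    correctable_of_card_lt fun L hL => hdist L (mem_centralizerSpace.1 hL)
  obtain ⟨R₁, -, hA, hR₁⟩ :=
    Separable.exists_correctable_sdiff hC.le hc1.le hK hCK hsep hd hsmall Finset.univ
  obtain ⟨R₂, -, hB, hR₂⟩ :=
    Separable.exists_correctable_sdiff hC.le hc1.le hK hCK hsep hd hsmall R₁
  have hk := le_finrank_stabilizerSpace_add_card hg hA hB (R := R₂) fun i => by
    by_cases i ∈ R₁ <;> by_cases i ∈ R₂ <;> simp [*]
  set t := (d : ℝ) ^ (c - 1)
  have ht : 0 ≤ (C + K) * t := by positivity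
  calc ((n - Module.finrank (ZMod 2) (stabilizerSpace g) : ℕ) : ℝ)
      ≤ R₂.card := by exact_mod_cast (by omega : n - _ ≤ R₂.card)
    _ ≤ (C + K) * t * R₁.card := hR₂.trans (residualBound_le ht hK (Nat.cast_nonneg _))
    _ ≤ (C + K) * t * ((C + K) * t * n) := by
        gcongr
        simpa using hR₁.trans (residualBound_le ht hK (Nat.cast_nonneg _))
    _ = (C + K) ^ 2 * (d : ℝ) ^ (2 * (c - 1)) * n := by
        rw [mul_comm 2, Real.rpow_mul (Nat.cast_nonneg d), Real.rpow_two]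
        ring

/-- Dimension bound: for any stabilizer code family whose connectivity graphs are
`s`-separable with `s(r) ≤ C·r^c`, `0 < c < 1`, the code dimension
`k = n - dim S` satisfies `k ≤ C'·d^{2(c-1)}·n` for a constant `C'`
depending only on `C` and `c`. -/
theorem stmt14_dimension_bound (C c : ℝ) (hC : 0 < C) (hc0 : 0 < c) (hc1 : c < 1) :
    ∃ C' : ℝ, 0 < C' ∧
      ∀ (n : ℕ) (ι : Type) [Fintype ι] (g : ι → PauliVec n),
        (∀ a b : ι, sympForm (g a) (g b) = 0) →
        ∀ d : ℕ, 1 ≤ d →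
          -- d lower-bounds the weight of every nontrivial logical operator
          (∀ L : PauliVec n, (∀ a : ι, sympForm L (g a) = 0) →
            L ∉ Submodule.span (ZMod 2) (Set.range g) → d ≤ (psupp L).card) →
          -- every induced subgraph of the connectivity graph has a balanced
          -- separator of size at most C·r^c
          (∀ V' : Finset (Fin n), ∃ A Sp B : Finset (Fin n),
            A ∪ Sp ∪ B = V' ∧ Disjoint A Sp ∧ Disjoint A B ∧ Disjoint Sp B ∧
            2 * A.card ≤ V'.card ∧ 2 * B.card ≤ V'.card ∧
            (Sp.card : ℝ) ≤ C * (V'.card : ℝ) ^ c ∧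
            (∀ u ∈ A, ∀ v ∈ B,
              ¬(u ≠ v ∧ ∃ a : ι, u ∈ psupp (g a) ∧ v ∈ psupp (g a)))) →
          ((n - Module.finrank (ZMod 2)
              (Submodule.span (ZMod 2) (Set.range g)) : ℕ) : ℝ) ≤
            C' * (d : ℝ) ^ (2 * (c - 1)) * (n : ℝ) :=
  stmt14_dimension_bound_general C c hC hc1
end

section
/- Classical linear code version: let H ∈ F_2^{m×n} be a parity check matrix of a classical linear code with k = n - rank(H), and call a subset E ⊆ [n] correctable if no nonzero codeword is supported in E. If V = [n] = A ⊔ B where A is a disjoint union of blocks A_i, each correctable, and no row of H has support meeting two distinct blocks A_i, then A is correctable and k ≤ |B|. -/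
/-- Support of a vector in `F₂ⁿ`. -/
def vsupp {n : ℕ} (x : Fin n → ZMod 2) : Finset (Fin n) :=
  Finset.univ.filter fun i => x i ≠ 0

/-- Classical linear code version of the union/dimension bound: if the bit set is
partitioned as `A ⊔ B`, where `A` is a disjoint union of blocks `A i`, each
erasure-correctable (no nonzero codeword supported in it), and no parity check
involves bits from two distinct blocks, then `A` is correctable and `k ≤ |B|`. -/
theorem stmt17_classical_union_bound {m n t : ℕ}
    (H : Matrix (Fin m) (Fin n) (ZMod 2))
    (A B : Finset (Fin n)) (AB : Fin t → Finset (Fin n))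
    (hA : A = Finset.univ.biUnion AB)
    (hdisjAB : Disjoint A B) (hcover : A ∪ B = Finset.univ)
    (hblocks : ∀ i j : Fin t, i ≠ j → Disjoint (AB i) (AB j))
    (hdec : ∀ (r : Fin m) (i j : Fin t), i ≠ j →
      (∃ p ∈ AB i, H r p ≠ 0) → ∀ q ∈ AB j, H r q = 0)
    (hcorr : ∀ (i : Fin t) (x : Fin n → ZMod 2),
      H.mulVec x = 0 → vsupp x ⊆ AB i → x = 0) :
    (∀ x : Fin n → ZMod 2, H.mulVec x = 0 → vsupp x ⊆ A → x = 0) ∧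
    n - H.rank ≤ B.card := by
  have part1 : ∀ x : Fin n → ZMod 2, H.mulVec x = 0 → vsupp x ⊆ A → x = 0 := by
    intro x hx hsupp
    -- for each block i, the restriction x_i is a codeword supported in AB i
    have hblock : ∀ i : Fin t, ∀ p ∈ AB i, x p = 0 := by
      intro i
      set xi : Fin n → ZMod 2 := fun p => if p ∈ AB i then x p else 0 with hxi
      have hsuppi : vsupp xi ⊆ AB i := by
        intro p hp
        simp only [vsupp, Finset.mem_filter] at hp
        by_contra hpne
        simp [hxi, hpne] at hp
      have hker : H.mulVec xi = 0 := by
        funext r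
        simp only [Matrix.mulVec, dotProduct, Pi.zero_apply]
        by_cases htouch : ∃ p ∈ AB i, H r p ≠ 0
        · -- row r touches block i; it vanishes on all other blocks
          have heq : ∀ p : Fin n, H r p * xi p = H r p * x p := by
            intro p
            by_cases hpi : p ∈ AB i
            · simp [hxi, hpi]
            · simp only [hxi, hpi, if_neg, mul_zero]
              by_cases hpx : x p = 0
              · simp [hpx]
              · have hpA : p ∈ A := hsupp (by simp [vsupp, hpx])
                rw [hA, Finset.mem_biUnion] at hpA
                obtain ⟨j, -, hpj⟩ := hpA
                have hji : j ≠ i := fun h => hpi (h ▸ hpj)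
                rw [hdec r i j (Ne.symm hji) htouch p hpj, zero_mul, zero_mul]
          rw [Finset.sum_congr rfl fun p _ => heq p]
          have := congrFun hx r
          simpa [Matrix.mulVec, dotProduct] using this
        · push_neg at htouch
          apply Finset.sum_eq_zero
          intro p _
          by_cases hpi : p ∈ AB i
          · rw [htouch p hpi, zero_mul]
          · simp [hxi, hpi]
      have := hcorr i xi hker hsuppi
      intro p hp
      have : xi p = 0 := congrFun this p
      simpa [hxi, hp] using this
    funext p
    show x p = 0
    by_contra hpx
    have hpA : p ∈ A := hsupp (by simp [vsupp, hpx])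
    rw [hA, Finset.mem_biUnion] at hpA
    obtain ⟨i, -, hpi⟩ := hpA
    exact hpx (hblock i p hpi)
  refine ⟨part1, ?_⟩
  -- rank-nullity: n - rank = dim ker
  have hrn : H.rank + Module.finrank (ZMod 2) (LinearMap.ker H.mulVecLin) = n := by
    have := LinearMap.finrank_range_add_finrank_ker H.mulVecLin
    simpa [Matrix.rank, Module.finrank_fintype_fun_eq_card] using this
  have hker_le : Module.finrank (ZMod 2) (LinearMap.ker H.mulVecLin) ≤ B.card := by
    -- project kernel onto coordinates in B; injective by part1
    let f : (Fin n → ZMod 2) →ₗ[ZMod 2] (B → ZMod 2) :=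
      LinearMap.funLeft (ZMod 2) (ZMod 2) (fun b => (b : Fin n))
    have hinj : Function.Injective (f.comp (LinearMap.ker H.mulVecLin).subtype) := by
      rw [← LinearMap.ker_eq_bot, LinearMap.ker_eq_bot']
      intro ⟨x, hxker⟩ hfx
      have hxker' : H.mulVec x = 0 := hxker
      have hB : ∀ b ∈ B, x b = 0 := by
        intro b hb
        exact congrFun hfx ⟨b, hb⟩
      have hsupp : vsupp x ⊆ A := by
        intro p hp
        simp only [vsupp, Finset.mem_filter] at hp
        have : p ∈ A ∪ B := hcover ▸ Finset.mem_univ p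
        rcases Finset.mem_union.mp this with h | h
        · exact h
        · exact absurd (hB p h) hp.2
      exact Subtype.ext (part1 x hxker' hsupp)
    calc Module.finrank (ZMod 2) (LinearMap.ker H.mulVecLin)
        ≤ Module.finrank (ZMod 2) (B → ZMod 2) :=
          LinearMap.finrank_le_finrank_of_injective hinj
      _ = B.card := by
          rw [Module.finrank_fintype_fun_eq_card, Fintype.card_coe]
  omega
end
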